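/- Comparison principle: let 0 < α < 1, h > 0, and u, v : ℤ → ℝ bounded with u(j₀) = v(j₀) and u(j) ≥ v(j) for all j ≥ j₀. Then (δ_right)^α u(j₀) ≤ (δ_right)^α v(j₀), with equality if and only if u(j) = v(j) for all j ≥ j₀. -/

import Mathlib

open Real

/-- The generalized binomial coefficient `(α choose m) = α(α−1)⋯(α−m+1)/m!`. -/
noncomputable def rchoose (α : ℝ) (m : ℕ) : ℝ :=
  (∏ i ∈ Finset.range m, (α - i)) / (m.factorial : ℝ)

/-- The kernel `Λ^α(m) = (−1)^m (α choose m)`. -/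
noncomputable def Lam (α : ℝ) (m : ℕ) : ℝ := (-1) ^ m * rchoose α m

/-- The fractional discrete derivative on the mesh `ℤ_h`:
`(δ_right)^α u(n) = h^{-α} ∑_{m=0}^∞ Λ^α(m) u(n+m)`. -/
noncomputable def deltaRightPow (α h : ℝ) (u : ℤ → ℝ) (n : ℤ) : ℝ :=
  h ^ (-α) * ∑' m : ℕ, Lam α m * u (n + (m : ℤ))

/-!
For `0 < α < 1` the kernel has `Λ^α(0) = 1` and `Λ^α(m) < 0` for `m ≥ 1`, and it is absolutely
summable because its partial sums `∑_{k ≤ m} Λ^α(k) = -((m + 1)/α) Λ^α(m + 1)` are positive.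
The difference `(δ_right)^α u(j₀) - (δ_right)^α v(j₀)` is `h^{-α} ∑_{m ≥ 1} Λ^α(m) w(m)` with
`w(m) = u(j₀ + m) - v(j₀ + m) ≥ 0`: a series of nonpositive terms, which vanishes exactly when
every `w(m)` does.
-/

open Finset

section Kernel

theorem Lam_zero (α : ℝ) : Lam α 0 = 1 := by
  simp [Lam, rchoose]

theorem Lam_succ (α : ℝ) (m : ℕ) : Lam α (m + 1) = Lam α m * ((m - α) / (m + 1)) := by
  have hf : (m.factorial : ℝ) ≠ 0 := by exact_mod_cast m.factorial_ne_zero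
  simp only [Lam, rchoose, prod_range_succ, Nat.factorial_succ, pow_succ]
  push_cast
  field_simp
  ring

variable {α : ℝ}

theorem Lam_succ_neg (hα : 0 < α) (hα1 : α < 1) (m : ℕ) : Lam α (m + 1) < 0 := by
  induction m with
  | zero => simpa [Lam_succ, Lam_zero] using hα
  | succ m ih =>
    rw [Lam_succ]
    push_cast
    exact mul_neg_of_neg_of_pos ih (div_pos (by linarith [m.cast_nonneg (α := ℝ)]) (by positivity))

theorem sum_range_succ_Lam (hα : α ≠ 0) (m : ℕ) :
    ∑ k ∈ range (m + 1), Lam α k = -((m + 1) / α) * Lam α (m + 1) := by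
  induction m with
  | zero => simp [Lam_succ, Lam_zero]; field_simp
  | succ m ih =>
    rw [sum_range_succ, ih, Lam_succ α (m + 1)]
    push_cast
    field_simp
    ring

theorem sum_range_abs_Lam_le (hα : 0 < α) (hα1 : α < 1) (n : ℕ) :
    ∑ k ∈ range n, |Lam α k| ≤ 2 := by
  have hpartial : 0 ≤ ∑ k ∈ range (n + 1), Lam α k := by
    rw [sum_range_succ_Lam hα.ne']
    exact mul_nonneg_of_nonpos_of_nonpos (by rw [neg_nonpos]; positivity)
      (Lam_succ_neg hα hα1 n).le
  have habs : ∑ k ∈ range (n + 1), |Lam α k| = 2 - ∑ k ∈ range (n + 1), Lam α k := by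
    rw [sum_range_succ', sum_range_succ' (Lam α), Lam_zero, abs_one]
    simp_rw [abs_of_neg (Lam_succ_neg hα hα1 _), sum_neg_distrib]
    ring
  calc ∑ k ∈ range n, |Lam α k| ≤ ∑ k ∈ range (n + 1), |Lam α k| :=
        sum_le_sum_of_subset_of_nonneg (range_subset_range.2 n.le_succ)
          fun _ _ _ => abs_nonneg _
    _ ≤ 2 := by linarith

theorem summable_abs_Lam (hα : 0 < α) (hα1 : α < 1) : Summable fun m => |Lam α m| :=
  summable_of_sum_range_le (fun _ => abs_nonneg _) (sum_range_abs_Lam_le hα hα1)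

theorem summable_Lam_mul (hα : 0 < α) (hα1 : α < 1) {w : ℕ → ℝ} {M : ℝ} (hw : ∀ m, |w m| ≤ M) :
    Summable fun m => Lam α m * w m :=
  ((summable_abs_Lam hα hα1).mul_right M).of_norm_bounded fun m => by
    rw [Real.norm_eq_abs, abs_mul]
    exact mul_le_mul_of_nonneg_left (hw m) (abs_nonneg _)

variable {w : ℕ → ℝ}

theorem Lam_mul_nonpos (hα : 0 < α) (hα1 : α < 1) (hw0 : w 0 = 0) (hw : ∀ m, 0 ≤ w m) (m : ℕ) :
    Lam α m * w m ≤ 0 := by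
  cases m with
  | zero => simp [hw0]
  | succ m => exact mul_nonpos_of_nonpos_of_nonneg (Lam_succ_neg hα hα1 m).le (hw _)

theorem tsum_Lam_mul_eq_zero_iff (hα : 0 < α) (hα1 : α < 1)
    (hs : Summable fun m => Lam α m * w m) (hw0 : w 0 = 0) (hw : ∀ m, 0 ≤ w m) :
    ∑' m, Lam α m * w m = 0 ↔ ∀ m, w m = 0 := by
  have hneg : ∑' m, -(Lam α m * w m) = 0 ↔ ∀ m, -(Lam α m * w m) = 0 := by
    rw [← hs.neg.hasSum_iff, hasSum_zero_iff_of_nonneg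
      fun m => neg_nonneg.2 (Lam_mul_nonpos hα hα1 hw0 hw m), funext_iff]
    rfl
  rw [tsum_neg, neg_eq_zero] at hneg
  refine hneg.trans (forall_congr' fun m => ?_)
  cases m with
  | zero => simp [hw0]
  | succ m => rw [neg_eq_zero, mul_eq_zero, or_iff_right (Lam_succ_neg hα hα1 m).ne]

end Kernel

section DeltaRightPow

variable {α h : ℝ}

theorem deltaRightPow_sub (hα : 0 < α) (hα1 : α < 1) {u v : ℤ → ℝ} {Mu Mv : ℝ}
    (hu : ∀ n, |u n| ≤ Mu) (hv : ∀ n, |v n| ≤ Mv) (n : ℤ) :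
    deltaRightPow α h u n - deltaRightPow α h v n = deltaRightPow α h (u - v) n := by
  simp only [deltaRightPow, Pi.sub_apply, mul_sub]
  rw [(summable_Lam_mul hα hα1 fun m => hu _).tsum_sub (summable_Lam_mul hα hα1 fun m => hv _),
    mul_sub]

variable {w : ℤ → ℝ} {j₀ : ℤ}

theorem deltaRightPow_nonpos (hα : 0 < α) (hα1 : α < 1) (hh : 0 ≤ h) (hw0 : w j₀ = 0)
    (hw : ∀ j, j₀ ≤ j → 0 ≤ w j) : deltaRightPow α h w j₀ ≤ 0 :=
  mul_nonpos_of_nonneg_of_nonpos (rpow_nonneg hh _) <| tsum_nonpos <|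
    Lam_mul_nonpos hα hα1 (by simpa using hw0) fun m => hw _ (by omega)

theorem deltaRightPow_eq_zero_iff (hα : 0 < α) (hα1 : α < 1) (hh : 0 < h) {M : ℝ}
    (hM : ∀ n, |w n| ≤ M) (hw0 : w j₀ = 0) (hw : ∀ j, j₀ ≤ j → 0 ≤ w j) :
    deltaRightPow α h w j₀ = 0 ↔ ∀ j, j₀ ≤ j → w j = 0 := by
  rw [deltaRightPow, mul_eq_zero, or_iff_right (rpow_pos_of_pos hh _).ne',
    tsum_Lam_mul_eq_zero_iff hα hα1 (summable_Lam_mul hα hα1 fun m => hM _) (by simpa using hw0)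
      fun m => hw _ (by omega)]
  refine ⟨fun H j hj => ?_, fun H m => H _ (by omega)⟩
  obtain ⟨m, rfl⟩ := Int.le.dest hj
  exact H m

end DeltaRightPow

/-- Comparison principle for the fractional discrete derivative. -/
theorem comparison_principle (α h : ℝ) (hα : 0 < α) (hα1 : α < 1) (hh : 0 < h)
    (u v : ℤ → ℝ) (M : ℝ) (hu : ∀ n, |u n| ≤ M) (hv : ∀ n, |v n| ≤ M) (j₀ : ℤ)
    (heq : u j₀ = v j₀) (hge : ∀ j, j₀ ≤ j → v j ≤ u j) :
    deltaRightPow α h u j₀ ≤ deltaRightPow α h v j₀ ∧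
      (deltaRightPow α h u j₀ = deltaRightPow α h v j₀ ↔ ∀ j, j₀ ≤ j → u j = v j) := by
  have hsub := deltaRightPow_sub (h := h) hα hα1 hu hv j₀
  have hbound : ∀ n, |(u - v) n| ≤ M + M := fun n =>
    (abs_sub _ _).trans (add_le_add (hu n) (hv n))
  have hw0 : (u - v) j₀ = 0 := by simp [heq]
  have hw : ∀ j, j₀ ≤ j → 0 ≤ (u - v) j := fun j hj => sub_nonneg.2 (hge j hj)
  refine ⟨?_, ?_⟩
  · rw [← sub_nonpos, hsub]
    exact deltaRightPow_nonpos hα hα1 hh.le hw0 hw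
  · rw [← sub_eq_zero, hsub, deltaRightPow_eq_zero_iff hα hα1 hh hbound hw0 hw]
    simp only [Pi.sub_apply, sub_eq_zero]
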